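/- Let (u, ρ) be a smooth solution of the prescribed curvature flow on [0, T) for smooth positive data f (on the closed unit disc) and j (on the unit circle), and suppose α₁, β₁ are constants with α(t) ≤ α₁ and β(t) ≤ β₁ for all t < T. Then for every t < T there holds sup_{closure B} u(·, t) ≤ sup_{closure B} u(·, 0) + t ( α₁ ‖f‖_{L∞} + β₁ ‖j‖_{L∞} ). -/

import Mathlib

open MeasureTheory Metric Set Filter
open scoped Real Topology ENNReal

noncomputable section

/-- The closed unit disc in `ℂ ≅ ℝ²`. -/
def cdisc : Set ℂ := Metric.closedBall 0 1

/-- The open unit disc `B`. -/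
def odisc : Set ℂ := Metric.ball 0 1

/-- The unit circle `∂B`. -/
def bdry : Set ℂ := Metric.sphere 0 1

/-- The boundary point with angle `θ`. -/
def bpt (θ : ℝ) : ℂ := Complex.exp ((θ : ℂ) * Complex.I)

/-- Boundary integral with respect to arclength `ds₀`. -/
def circInt (φ : ℂ → ℝ) : ℝ := ∫ θ in (0:ℝ)..(2 * Real.pi), φ (bpt θ)

/-- Integral over the open unit disc with respect to Lebesgue measure. -/
def ballInt (φ : ℂ → ℝ) : ℝ := ∫ z in odisc, φ z

/-- Outward normal derivative `∂w/∂ν₀(z) = z·∇w(z)` for `z ∈ ∂B`. -/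
def nder (w : ℂ → ℝ) (z : ℂ) : ℝ := fderivWithin ℝ w cdisc z z

/-- The Euclidean Laplacian, computed with derivatives within the closed disc. -/
def lapW (w : ℂ → ℝ) (z : ℂ) : ℝ :=
  fderivWithin ℝ (fun x => fderivWithin ℝ w cdisc x 1) cdisc z 1 +
  fderivWithin ℝ (fun x => fderivWithin ℝ w cdisc x Complex.I) cdisc z Complex.I

/-- The coefficient `α(t) = 2ρ(t)/∫_B f e^{2u(·,t)} dz`. -/
def alphaC (f : ℂ → ℝ) (u : ℂ → ℝ → ℝ) (ρ : ℝ → ℝ) (t : ℝ) : ℝ :=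
  2 * ρ t / ballInt fun z => f z * Real.exp (2 * u z t)

/-- The coefficient `β(t) = 2(π − ρ(t))/∫_{∂B} j e^{u(·,t)} ds₀`. -/
def betaC (j : ℂ → ℝ) (u : ℂ → ℝ → ℝ) (ρ : ℝ → ℝ) (t : ℝ) : ℝ :=
  2 * (Real.pi - ρ t) / circInt fun z => j z * Real.exp (u z t)

/-- The time domain `[0, T)` (with `T ∈ (0, ∞]`). -/
def flowDom (T : ℝ≥0∞) : Set ℝ := {t : ℝ | 0 ≤ t ∧ ENNReal.ofReal t < T}

/-- `(u, ρ)` is a smooth solution of the prescribed curvature flow on `[0, T)`: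
`∂u/∂t = α f + e^{−2u} Δu` in `B`, `∂u/∂t = β j − e^{−u}(∂u/∂ν₀ + 1)` on `∂B`,
and `dρ/dt = log (β²/α)`, with `u` smooth on `closure B × [0,T)` and `ρ` C¹ with
values in `(0, π)`. -/
def IsFlow (f j : ℂ → ℝ) (T : ℝ≥0∞) (u : ℂ → ℝ → ℝ) (ρ : ℝ → ℝ) : Prop :=
  ContDiffOn ℝ (⊤ : ℕ∞) (fun p : ℂ × ℝ => u p.1 p.2) (cdisc ×ˢ flowDom T) ∧
  ContDiffOn ℝ 1 ρ (flowDom T) ∧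
  (∀ t ∈ flowDom T, ρ t ∈ Set.Ioo 0 Real.pi) ∧
  (∀ t ∈ flowDom T, 0 < t → ∀ z ∈ odisc,
    deriv (u z) t = alphaC f u ρ t * f z + Real.exp (-(2 * u z t)) * lapW (fun w => u w t) z) ∧
  (∀ t ∈ flowDom T, 0 < t → ∀ z ∈ bdry,
    deriv (u z) t = betaC j u ρ t * j z - Real.exp (-(u z t)) * (nder (fun w => u w t) z + 1)) ∧
  (∀ t ∈ flowDom T, 0 < t →
    deriv ρ t = Real.log (betaC j u ρ t ^ 2 / alphaC f u ρ t))

/-!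
Maximum principle. Put `C = α₁ ‖f‖_∞ + β₁ ‖j‖_∞`; both coefficients are nonnegative since
`0 < ρ < π` makes `α` and `β` positive. For `ε > 0` let `(z₀, s)` maximize `u(z, τ) - (C + ε) τ`
over the closed disc times `[0, t]`. If `s > 0`, then `∂ₜu(z₀, s) ≥ C + ε`, while `z₀` maximizes
`u(·, s)`: at an interior point `Δu ≤ 0`, so `∂ₜu ≤ α f ≤ C`; at a boundary point
`∂u/∂ν₀ ≥ 0`, so `∂ₜu < β j ≤ C`. Hence `s = 0`, and letting `ε → 0` gives the bound.
-/

theorem IsLocalMax.deriv_deriv_nonpos {g : ℝ → ℝ} {a : ℝ} (h : IsLocalMax g a)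
    (hc : ContinuousAt g a) : deriv (deriv g) a ≤ 0 := by
  by_contra! hpos
  have hconst : g =ᶠ[𝓝 a] fun _ => g a :=
    (h.and (isLocalMin_of_deriv_deriv_pos hpos h.deriv_eq_zero hc)).mono
      fun x hx => le_antisymm hx.1 hx.2
  have hderiv : deriv g =ᶠ[𝓝 a] fun _ => 0 :=
    hconst.eventuallyEq_nhds.mono fun x hx => by rw [hx.deriv_eq, deriv_const]
  simp [hderiv.deriv_eq] at hpos

theorem IsLocalMax.fderiv_fderiv_apply_nonpos {E : Type*} [NormedAddCommGroup E]
    [NormedSpace ℝ E] {v : E → ℝ} {z : E} (h : IsLocalMax v z) (hv : ContDiffAt ℝ 2 v z)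
    (e : E) : fderiv ℝ (fun x => fderiv ℝ v x e) z e ≤ 0 := by
  have hL : ∀ r : ℝ, HasDerivAt (fun r : ℝ => z + r • e) e r := fun r => by
    simpa using ((hasDerivAt_id r).smul_const e).const_add z
  have hLz : Tendsto (fun r : ℝ => z + r • e) (𝓝 0) (𝓝 z) := by
    simpa using (hL 0).continuousAt.tendsto
  have hdiff : ∀ᶠ x in 𝓝 z, DifferentiableAt ℝ v x :=
    (hv.eventually (by simp)).mono fun x hx => hx.differentiableAt (by norm_num)
  have hG : HasFDerivAt (fun x => fderiv ℝ v x e) (fderiv ℝ (fun x => fderiv ℝ v x e) z) z :=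
    (((hv.fderiv_right (m := 1) (by norm_num)).clm_apply contDiffAt_const).differentiableAt
      (by norm_num)).hasFDerivAt
  have hderiv : deriv (fun r : ℝ => v (z + r • e)) =ᶠ[𝓝 0] fun r => fderiv ℝ v (z + r • e) e :=
    (hLz.eventually hdiff).mono fun r hr => (hr.hasFDerivAt.comp_hasDerivAt r (hL r)).deriv
  have hsecond : deriv (deriv fun r : ℝ => v (z + r • e)) 0 =
      fderiv ℝ (fun x => fderiv ℝ v x e) z e := by
    rw [hderiv.deriv_eq]
    exact (hG.comp_hasDerivAt_of_eq 0 (hL 0) (by simp)).deriv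
  rw [← hsecond]
  have hmax : IsLocalMax (fun r : ℝ => v (z + r • e)) 0 :=
    IsMaxFilter.comp_tendsto (g := fun r : ℝ => z + r • e)
      (by rw [zero_smul, add_zero]; exact h) hLz
  exact hmax.deriv_deriv_nonpos
    (hv.continuousAt.comp_of_eq (hL 0).continuousAt (by simp))

theorem cdisc_mem_nhds {z : ℂ} (hz : z ∈ odisc) : cdisc ∈ 𝓝 z :=
  mem_of_superset (isOpen_ball.mem_nhds hz) ball_subset_closedBall

theorem lapW_eq_of_mem_odisc (v : ℂ → ℝ) {z : ℂ} (hz : z ∈ odisc) :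
    lapW v z = fderiv ℝ (fun x => fderiv ℝ v x 1) z 1 +
      fderiv ℝ (fun x => fderiv ℝ v x Complex.I) z Complex.I := by
  have hinner (e : ℂ) : (fun x => fderivWithin ℝ v cdisc x e) =ᶠ[𝓝 z] fun x => fderiv ℝ v x e :=
    eventually_of_mem (isOpen_ball.mem_nhds hz) fun x hx => by
      simp only [fderivWithin_of_mem_nhds (cdisc_mem_nhds hx)]
  rw [lapW, fderivWithin_of_mem_nhds (cdisc_mem_nhds hz), fderivWithin_of_mem_nhds
    (cdisc_mem_nhds hz), (hinner 1).fderiv_eq, (hinner Complex.I).fderiv_eq]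

theorem lapW_nonpos_of_isLocalMax {v : ℂ → ℝ} {z : ℂ} (hz : z ∈ odisc) (h : IsLocalMax v z)
    (hv : ContDiffAt ℝ 2 v z) : lapW v z ≤ 0 := by
  rw [lapW_eq_of_mem_odisc v hz]
  exact add_nonpos (h.fderiv_fderiv_apply_nonpos hv 1) (h.fderiv_fderiv_apply_nonpos hv _)

theorem nder_nonneg_of_isMaxOn {v : ℂ → ℝ} {z : ℂ} (hz : z ∈ cdisc) (h : IsMaxOn v cdisc z) :
    0 ≤ nder v z := by
  have hcone : 0 - z ∈ posTangentConeAt cdisc z :=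
    sub_mem_posTangentConeAt_of_segment_subset
      ((convex_closedBall 0 1).segment_subset hz (mem_closedBall_self zero_le_one))
  have := h.localize.fderivWithin_nonpos hcone
  rw [zero_sub, map_neg] at this
  exact neg_nonpos.mp this

theorem IsMaxOn.deriv_nonneg_of_Icc {g : ℝ → ℝ} {a s : ℝ} (h : IsMaxOn g (Icc a s) s)
    (has : a < s) (hg : DifferentiableAt ℝ g s) : 0 ≤ deriv g s := by
  have hcone : a - s ∈ posTangentConeAt (Icc a s) s :=
    sub_mem_posTangentConeAt_of_segment_subset
      ((convex_Icc a s).segment_subset (right_mem_Icc.mpr has.le) (left_mem_Icc.mpr has.le))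
  have := h.localize.hasFDerivWithinAt_nonpos hg.hasDerivAt.hasFDerivAt.hasFDerivWithinAt hcone
  simp only [ContinuousLinearMap.toSpanSingleton_apply, smul_eq_mul] at this
  exact nonneg_of_mul_nonpos_right this (sub_neg.mpr has)

theorem IsCompact.le_iSup_of_continuousOn {X : Type*} [TopologicalSpace X] {K : Set X}
    (hK : IsCompact K) {g : X → ℝ} (hg : ContinuousOn g K) {x : X} (hx : x ∈ K) :
    g x ≤ ⨆ y : K, g y :=
  le_ciSup (f := fun y : K => g y)
    (by rw [← image_eq_range]; exact (hK.image_of_continuousOn hg).bddAbove) ⟨x, hx⟩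

theorem mul_le_mul_iSup_abs {X : Type*} [TopologicalSpace X] {K : Set X} (hK : IsCompact K)
    {g : X → ℝ} (hg : ContinuousOn g K) {x : X} (hx : x ∈ K) (hgx : 0 ≤ g x) {a b : ℝ}
    (hab : a ≤ b) (hb : 0 ≤ b) : a * g x ≤ b * ⨆ y : K, |g y| :=
  mul_le_mul hab ((le_abs_self _).trans (hK.le_iSup_of_continuousOn hg.abs hx)) hgx hb

theorem ballInt_pos {φ : ℂ → ℝ} (hφ : ContinuousOn φ cdisc) (hpos : ∀ z ∈ cdisc, 0 < φ z) :
    0 < ballInt φ := by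
  obtain ⟨z₀, hz₀, hmin⟩ := (isCompact_closedBall (0 : ℂ) 1).exists_isMinOn
    ⟨0, mem_closedBall_self zero_le_one⟩ hφ
  have hvol : 0 < volume.real odisc :=
    ENNReal.toReal_pos (measure_ball_pos volume 0 one_pos).ne' measure_ball_lt_top.ne
  calc 0 < φ z₀ * volume.real odisc := mul_pos (hpos z₀ hz₀) hvol
    _ ≤ ballInt φ :=
      setIntegral_ge_of_const_le_real measurableSet_ball measure_ball_lt_top.ne
        (fun z hz => hmin (ball_subset_closedBall hz))
        ((hφ.integrableOn_compact (isCompact_closedBall 0 1)).mono_set ball_subset_closedBall)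

theorem bpt_mem_bdry (θ : ℝ) : bpt θ ∈ bdry := by
  simp [bdry, bpt, Complex.norm_exp]

theorem circInt_pos {φ : ℂ → ℝ} (hφ : ContinuousOn φ bdry) (hpos : ∀ z ∈ bdry, 0 < φ z) :
    0 < circInt φ := by
  have hcont : Continuous fun θ => φ (bpt θ) :=
    hφ.comp_continuous (by unfold bpt; fun_prop) bpt_mem_bdry
  exact intervalIntegral.intervalIntegral_pos_of_pos_on (hcont.intervalIntegrable _ _)
    (fun θ _ => hpos _ (bpt_mem_bdry θ)) Real.two_pi_pos

theorem le_add_mul_of_deriv_le_of_isMaxOn {X : Type*} [TopologicalSpace X] {K : Set X}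
    (hK : IsCompact K) {w : X → ℝ → ℝ} {t M C : ℝ} (ht : 0 ≤ t)
    (hw : ContinuousOn (fun p : X × ℝ => w p.1 p.2) (K ×ˢ Icc 0 t))
    (hw0 : ∀ z ∈ K, w z 0 ≤ M)
    (hdiff : ∀ z ∈ K, ∀ s ∈ Ioc 0 t, DifferentiableAt ℝ (w z) s)
    (hderiv : ∀ s ∈ Ioc 0 t, ∀ z ∈ K, IsMaxOn (fun y => w y s) K z → deriv (w z) s ≤ C) :
    ∀ z ∈ K, w z t ≤ M + t * C := by
  intro z hz
  suffices h : ∀ ε > 0, w z t ≤ M + t * (C + ε) by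
    have hlim : Tendsto (fun ε => M + t * (C + ε)) (𝓝[>] 0) (𝓝 (M + t * (C + 0))) :=
      (Continuous.tendsto (by fun_prop) 0).mono_left nhdsWithin_le_nhds
    simpa using ge_of_tendsto hlim (eventually_nhdsWithin_of_forall h)
  intro ε hε
  obtain ⟨⟨z₀, s⟩, ⟨hz₀, hs⟩, hmax⟩ := (hK.prod isCompact_Icc).exists_isMaxOn
    (f := fun p : X × ℝ => w p.1 p.2 - p.2 * (C + ε)) ⟨(z, t), hz, ht, le_rfl⟩
    (hw.sub (continuous_snd.mul continuous_const).continuousOn)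
  have hW (y : X) (τ : ℝ) (hy : y ∈ K) (hτ : τ ∈ Icc 0 t) :
      w y τ - τ * (C + ε) ≤ w z₀ s - s * (C + ε) :=
    hmax (mk_mem_prod hy hτ)
  rcases hs.1.eq_or_lt with rfl | hs₀
  · linarith [hw0 z₀ hz₀, hW z t hz ⟨ht, le_rfl⟩]
  · have hspace : IsMaxOn (fun y => w y s) K z₀ := fun y hy => by
      show w y s ≤ w z₀ s
      linarith [hW y s hy hs]
    have htime : IsMaxOn (fun τ => w z₀ τ - τ * (C + ε)) (Icc 0 s) s :=
      fun τ hτ => hW z₀ τ hz₀ ⟨hτ.1, hτ.2.trans hs.2⟩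
    have hhas : HasDerivAt (fun τ => w z₀ τ - τ * (C + ε)) (deriv (w z₀) s - 1 * (C + ε)) s :=
      (hdiff z₀ hz₀ s ⟨hs₀, hs.2⟩).hasDerivAt.sub ((hasDerivAt_id' s).mul_const (C + ε))
    have := htime.deriv_nonneg_of_Icc hs₀ hhas.differentiableAt
    rw [hhas.deriv] at this
    linarith [hderiv s ⟨hs₀, hs.2⟩ z₀ hz₀ hspace]

theorem Icc_subset_flowDom {T : ℝ≥0∞} {t : ℝ} (ht : t ∈ flowDom T) : Icc 0 t ⊆ flowDom T :=
  fun _ hτ => ⟨hτ.1, (ENNReal.ofReal_le_ofReal hτ.2).trans_lt ht.2⟩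

theorem flowDom_mem_nhds {T : ℝ≥0∞} {t : ℝ} (ht : t ∈ flowDom T) (h0 : 0 < t) :
    flowDom T ∈ 𝓝 t :=
  mem_of_superset (inter_mem (Ici_mem_nhds h0)
    ((isOpen_lt ENNReal.continuous_ofReal continuous_const).mem_nhds ht.2)) fun _ hτ => hτ

namespace IsFlow

variable {f j : ℂ → ℝ} {T : ℝ≥0∞} {u : ℂ → ℝ → ℝ} {ρ : ℝ → ℝ} {t : ℝ} {z : ℂ}

theorem contDiffOn_slice (hflow : IsFlow f j T u ρ) (ht : t ∈ flowDom T) :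
    ContDiffOn ℝ (⊤ : ℕ∞) (fun z => u z t) cdisc :=
  hflow.1.comp (contDiff_id.prodMk contDiff_const).contDiffOn fun _ hz => mk_mem_prod hz ht

theorem differentiableAt_time (hflow : IsFlow f j T u ρ) (hz : z ∈ cdisc) (ht : t ∈ flowDom T)
    (h0 : 0 < t) : DifferentiableAt ℝ (u z) t :=
  (((hflow.1.differentiableOn (by simp)) _ ⟨hz, ht⟩).comp t
    ((differentiableAt_const z).prodMk differentiableAt_id).differentiableWithinAt
    fun _ hτ => mk_mem_prod hz hτ).differentiableAt (flowDom_mem_nhds ht h0)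

theorem alphaC_pos (hflow : IsFlow f j T u ρ) (hf : ContinuousOn f cdisc)
    (hfpos : ∀ z ∈ cdisc, 0 < f z) (ht : t ∈ flowDom T) : 0 < alphaC f u ρ t :=
  div_pos (by linarith [(hflow.2.2.1 t ht).1]) <| ballInt_pos
    (hf.mul (Real.continuous_exp.comp_continuousOn
      (continuousOn_const.mul (hflow.contDiffOn_slice ht).continuousOn)))
    fun z hz => mul_pos (hfpos z hz) (Real.exp_pos _)

theorem betaC_pos (hflow : IsFlow f j T u ρ) (hj : ContinuousOn j bdry)
    (hjpos : ∀ z ∈ bdry, 0 < j z) (ht : t ∈ flowDom T) : 0 < betaC j u ρ t :=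
  div_pos (by linarith [(hflow.2.2.1 t ht).2]) <| circInt_pos
    (hj.mul (Real.continuous_exp.comp_continuousOn
      ((hflow.contDiffOn_slice ht).continuousOn.mono sphere_subset_closedBall)))
    fun z hz => mul_pos (hjpos z hz) (Real.exp_pos _)

theorem deriv_le_of_isMaxOn_of_mem_odisc (hflow : IsFlow f j T u ρ) (ht : t ∈ flowDom T)
    (h0 : 0 < t) (hz : z ∈ odisc) (hmax : IsMaxOn (fun w => u w t) cdisc z) :
    deriv (u z) t ≤ alphaC f u ρ t * f z := by
  have hsmooth : ContDiffAt ℝ 2 (fun w => u w t) z :=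
    ((hflow.contDiffOn_slice ht).contDiffAt (cdisc_mem_nhds hz)).of_le
      (WithTop.coe_le_coe.mpr le_top)
  have hlap := lapW_nonpos_of_isLocalMax hz (hmax.isLocalMax (cdisc_mem_nhds hz)) hsmooth
  obtain ⟨-, -, -, hinterior, -⟩ := hflow
  rw [hinterior t ht h0 z hz]
  exact add_le_of_nonpos_right (mul_nonpos_of_nonneg_of_nonpos (Real.exp_pos _).le hlap)

theorem deriv_lt_of_isMaxOn_of_mem_bdry (hflow : IsFlow f j T u ρ) (ht : t ∈ flowDom T)
    (h0 : 0 < t) (hz : z ∈ bdry) (hmax : IsMaxOn (fun w => u w t) cdisc z) :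
    deriv (u z) t < betaC j u ρ t * j z := by
  have hnder := nder_nonneg_of_isMaxOn (sphere_subset_closedBall hz) hmax
  obtain ⟨-, -, -, -, hboundary, -⟩ := hflow
  rw [hboundary t ht h0 z hz]
  exact sub_lt_self _ (mul_pos (Real.exp_pos _) (by linarith))

end IsFlow

theorem flow_sup_bound_general (f j : ℂ → ℝ)
    (hf : ContDiffOn ℝ (⊤ : ℕ∞) f cdisc) (hfpos : ∀ z ∈ cdisc, 0 < f z)
    (hj : ContDiffOn ℝ (⊤ : ℕ∞) j bdry) (hjpos : ∀ z ∈ bdry, 0 < j z)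
    (T : ℝ≥0∞) (u : ℂ → ℝ → ℝ) (ρ : ℝ → ℝ)
    (hflow : IsFlow f j T u ρ)
    (α₁ β₁ : ℝ)
    (hα : ∀ t ∈ flowDom T, alphaC f u ρ t ≤ α₁)
    (hβ : ∀ t ∈ flowDom T, betaC j u ρ t ≤ β₁) :
    ∀ t ∈ flowDom T, ∀ z ∈ cdisc,
      u z t ≤ (⨆ w : cdisc, u ↑w 0) +
        t * (α₁ * (⨆ w : cdisc, |f ↑w|) + β₁ * (⨆ w : bdry, |j ↑w|)) := by
  intro t ht z hz
  have hK : IsCompact cdisc := isCompact_closedBall 0 1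
  have hdom : Icc 0 t ⊆ flowDom T := Icc_subset_flowDom ht
  have hα₁ : 0 ≤ α₁ := (hflow.alphaC_pos hf.continuousOn hfpos ht).le.trans (hα t ht)
  have hβ₁ : 0 ≤ β₁ := (hflow.betaC_pos hj.continuousOn hjpos ht).le.trans (hβ t ht)
  refine le_add_mul_of_deriv_le_of_isMaxOn hK ht.1
    (hflow.1.continuousOn.mono (prod_mono le_rfl hdom))
    (fun z => hK.le_iSup_of_continuousOn
      (hflow.contDiffOn_slice (hdom ⟨le_rfl, ht.1⟩)).continuousOn)
    (fun z hz s hs => hflow.differentiableAt_time hz (hdom (Ioc_subset_Icc_self hs)) hs.1) ?_ z hz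
  intro s hs z₀ hz₀ hmax
  have hs' : s ∈ flowDom T := hdom (Ioc_subset_Icc_self hs)
  rcases (show z₀ ∈ odisc ∪ bdry by rwa [odisc, bdry, ball_union_sphere]) with hin | hbd
  · calc deriv (u z₀) s ≤ alphaC f u ρ s * f z₀ :=
          hflow.deriv_le_of_isMaxOn_of_mem_odisc hs' hs.1 hin hmax
      _ ≤ α₁ * ⨆ w : cdisc, |f ↑w| :=
          mul_le_mul_iSup_abs hK hf.continuousOn hz₀ (hfpos z₀ hz₀).le (hα s hs') hα₁
      _ ≤ _ := le_add_of_nonneg_right (mul_nonneg hβ₁ (Real.iSup_nonneg fun _ => abs_nonneg _))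
  · calc deriv (u z₀) s ≤ betaC j u ρ s * j z₀ :=
          (hflow.deriv_lt_of_isMaxOn_of_mem_bdry hs' hs.1 hbd hmax).le
      _ ≤ β₁ * ⨆ w : bdry, |j ↑w| :=
          mul_le_mul_iSup_abs (isCompact_sphere 0 1) hj.continuousOn hbd (hjpos z₀ hbd).le
            (hβ s hs') hβ₁
      _ ≤ _ := le_add_of_nonneg_left (mul_nonneg hα₁ (Real.iSup_nonneg fun _ => abs_nonneg _))

/-- Maximum principle upper bound along the flow:
`sup_B u(·,t) ≤ sup_B u(·,0) + t (α₁ ‖f‖_∞ + β₁ ‖j‖_∞)`. -/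
theorem flow_sup_bound (f j : ℂ → ℝ)
    (hf : ContDiffOn ℝ (⊤ : ℕ∞) f cdisc) (hfpos : ∀ z ∈ cdisc, 0 < f z)
    (hj : ContDiffOn ℝ (⊤ : ℕ∞) j bdry) (hjpos : ∀ z ∈ bdry, 0 < j z)
    (T : ℝ≥0∞) (hT : 0 < T) (u : ℂ → ℝ → ℝ) (ρ : ℝ → ℝ)
    (hflow : IsFlow f j T u ρ)
    (α₁ β₁ : ℝ)
    (hα : ∀ t ∈ flowDom T, alphaC f u ρ t ≤ α₁)
    (hβ : ∀ t ∈ flowDom T, betaC j u ρ t ≤ β₁) :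
    ∀ t ∈ flowDom T, ∀ z ∈ cdisc,
      u z t ≤ (⨆ w : cdisc, u ↑w 0) +
        t * (α₁ * (⨆ w : cdisc, |f ↑w|) + β₁ * (⨆ w : bdry, |j ↑w|)) :=
  flow_sup_bound_general f j hf hfpos hj hjpos T u ρ hflow α₁ β₁ hα hβ
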